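/- arXiv:2205.14571 — 5 statements merged into one kernel-verified Lean document; each statement's English description precedes it below -/
import Mathlib

section
/- (Simulation lemma, finite-horizon.) Let S be a finite state space, 𝒜 a finite action set, H ∈ ℕ a horizon, and d₀ an initial distribution on S. For any policy π, any two transition models P and P', and any reward r, the values satisfy the exact identity: V^π_{P,r} − V^π_{P',r} = Σ_{h=0}^{H−1} Σ_{(s,a)∈S×𝒜} d^π_{P';h}(s,a) · Σ_{s'∈S} (P_h(s'|s,a) − P'_h(s'|s,a)) · V^π_{P,r;h+1}(s'). -/
/-!
Write `ν_h` for the state distribution at step `h` under `P'` and `V_h`, `V'_h` for the values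
under `P` and `P'`. Subtracting the Bellman equations of `V_h` and `V'_h` at one step gives
`⟨ν_h, V_h - V'_h⟩ - ⟨ν_{h+1}, V_{h+1} - V'_{h+1}⟩ = Σ_{s,a} d^π_{P';h}(s,a) ⟨P_h - P'_h, V_{h+1}⟩`,
since `ν_{h+1}` is the push-forward of `ν_h` through `π_h` and `P'_h`. Summing over `h < H`
telescopes to the claim, as `V_H = V'_H = 0`.
-/

noncomputable section

open Finset

/-- `p` is a probability distribution on the finite type `X`. -/
def IsDist {X : Type*} [Fintype X] (p : X → ℝ) : Prop :=
  (∀ x, 0 ≤ p x) ∧ (∑ x, p x) = 1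

variable {S Act : Type*} [Fintype S] [Fintype Act]

/-- Occupancy measure `d^π_{P;h}(s,a)`: the probability that, executing the policy `π`
in the transition model `P` starting from `d0`, the state-action pair at step `h`
is `(s,a)`. -/
def occ (d0 : S → ℝ) (π : ℕ → S → Act → ℝ) (P : ℕ → S → Act → S → ℝ) :
    ℕ → S → Act → ℝ
  | 0 => fun s a => d0 s * π 0 s a
  | h + 1 => fun s' a' => (∑ s, ∑ a, occ d0 π P h s a * P h s a s') * π (h + 1) s' a'

/-- `valAux π P r n h s` is the value function `V^π_{P,r;h}(s)` when there are `n`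
steps remaining (so the horizon is `n + h`); defined by backwards recursion with
`valAux π P r 0 h = 0`. In particular `V^π_{P,r;h} = valAux π P r (H - h) h`. -/
def valAux (π : ℕ → S → Act → ℝ) (P : ℕ → S → Act → S → ℝ) (r : ℕ → S → Act → ℝ) :
    ℕ → ℕ → S → ℝ
  | 0, _ => fun _ => 0
  | n + 1, h => fun s => ∑ a, π h s a *
      (r h s a + ∑ s', P h s a s' * valAux π P r n (h + 1) s')

section

variable (d0 : S → ℝ) (π : ℕ → S → Act → ℝ) (P P' : ℕ → S → Act → S → ℝ) (r : ℕ → S → Act → ℝ)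

def stateOcc : ℕ → S → ℝ
  | 0 => d0
  | h + 1 => fun s' => ∑ s, ∑ a, stateOcc h s * π h s a * P h s a s'

lemma occ_eq_stateOcc_mul (h : ℕ) (s : S) (a : Act) :
    occ d0 π P h s a = stateOcc d0 π P h s * π h s a := by
  induction h generalizing s a with
  | zero => rfl
  | succ h ih => simp only [occ, stateOcc, ih]

lemma sum_stateOcc_succ_mul (h : ℕ) (f : S → ℝ) :
    ∑ s', stateOcc d0 π P (h + 1) s' * f s'
      = ∑ s, ∑ a, occ d0 π P h s a * ∑ s', P h s a s' * f s' := by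
  simp only [stateOcc, occ_eq_stateOcc_mul, sum_mul, mul_sum]
  rw [sum_comm]
  refine sum_congr rfl fun s _ => ?_
  rw [sum_comm]
  exact sum_congr rfl fun a _ => sum_congr rfl fun s' _ => by ring

lemma valAux_succ_sub (n h : ℕ) (s : S) :
    valAux π P r (n + 1) h s - valAux π P' r (n + 1) h s
      = ∑ a, π h s a * ((∑ s', (P h s a s' - P' h s a s') * valAux π P r n (h + 1) s')
          + ∑ s', P' h s a s' * (valAux π P r n (h + 1) s' - valAux π P' r n (h + 1) s')) := by
  rw [valAux, valAux, ← sum_sub_distrib]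
  refine sum_congr rfl fun a _ => ?_
  rw [← mul_sub, add_sub_add_left_eq_sub, ← sum_add_distrib, ← sum_sub_distrib]
  exact congrArg _ (sum_congr rfl fun s' _ => by ring)

lemma sum_stateOcc_mul_valAux_succ_sub (n h : ℕ) :
    ∑ s, stateOcc d0 π P' h s * (valAux π P r (n + 1) h s - valAux π P' r (n + 1) h s)
      = ∑ s, ∑ a, occ d0 π P' h s a *
          (∑ s', (P h s a s' - P' h s a s') * valAux π P r n (h + 1) s')
        + ∑ s, stateOcc d0 π P' (h + 1) s *
          (valAux π P r n (h + 1) s - valAux π P' r n (h + 1) s) := by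
  simp only [sum_stateOcc_succ_mul, valAux_succ_sub, occ_eq_stateOcc_mul, mul_sum,
    ← sum_add_distrib]
  exact sum_congr rfl fun s _ => sum_congr rfl fun a _ => sum_congr rfl fun s' _ => by ring

end

theorem simulation_lemma_general (H : ℕ)
    (d0 : S → ℝ)
    (π : ℕ → S → Act → ℝ)
    (P P' : ℕ → S → Act → S → ℝ)
    (r : ℕ → S → Act → ℝ) :
    (∑ s, d0 s * valAux π P r H 0 s) - (∑ s, d0 s * valAux π P' r H 0 s)
      = ∑ h ∈ Finset.range H, ∑ s, ∑ a, occ d0 π P' h s a *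
          (∑ s', (P h s a s' - P' h s a s') * valAux π P r (H - (h + 1)) (h + 1) s') := by
  set gap : ℕ → ℝ := fun h => ∑ s, stateOcc d0 π P' h s *
    (valAux π P r (H - h) h s - valAux π P' r (H - h) h s) with hgap
  have gap_zero :
      gap 0 = (∑ s, d0 s * valAux π P r H 0 s) - ∑ s, d0 s * valAux π P' r H 0 s := by
    simp only [hgap, stateOcc, Nat.sub_zero, mul_sub, sum_sub_distrib]
  have gap_horizon : gap H = 0 := by simp [hgap, valAux]
  rw [← gap_zero, ← sub_zero (gap 0), ← gap_horizon, ← sum_range_sub']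
  refine sum_congr rfl fun h hh => ?_
  obtain ⟨n, hn⟩ : ∃ n, H - h = n + 1 := ⟨H - (h + 1), by have := mem_range.mp hh; omega⟩
  have hn' : H - (h + 1) = n := by omega
  simp only [hgap, hn, hn', sum_stateOcc_mul_valAux_succ_sub]
  ring

/-- **Simulation lemma.** -/
theorem simulation_lemma (H : ℕ)
    (d0 : S → ℝ) (hd0 : IsDist d0)
    (π : ℕ → S → Act → ℝ) (hπ : ∀ h s, IsDist (π h s))
    (P P' : ℕ → S → Act → S → ℝ)
    (hP : ∀ h s a, IsDist (P h s a)) (hP' : ∀ h s a, IsDist (P' h s a))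
    (r : ℕ → S → Act → ℝ) :
    (∑ s, d0 s * valAux π P r H 0 s) - (∑ s, d0 s * valAux π P' r H 0 s)
      = ∑ h ∈ Finset.range H, ∑ s, ∑ a, occ d0 π P' h s a *
          (∑ s', (P h s a s' - P' h s a s') * valAux π P r (H - (h + 1)) (h + 1) s') :=
  simulation_lemma_general H d0 π P P' r
end
end

section
/- (Total-variation propagation of occupancy distributions.) Let S be a finite state space, 𝒜 a finite action set, H ∈ ℕ, and d₀ an initial distribution on S. Let P and P̂ be two transition models and suppose there exist ε_0,…,ε_{H−1} ≥ 0 such that for every policy π and every t ∈ {0,…,H−1}: Σ_{(s,a)} d^π_{P;t}(s,a) · ‖P̂_t(·|s,a) − P_t(·|s,a)‖_TV ≤ ε_t. Then for every policy π and every h ∈ {0,…,H−1}: Σ_{(s,a)} |d^π_{P̂;h}(s,a) − d^π_{P;h}(s,a)| ≤ Σ_{t=0}^{h−1} ε_t, where the sum on the right is empty (equal to 0) when h = 0. -/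
/-! Write `Δ_h = Σ_{s,a} |d^π_{P̂;h}(s,a) - d^π_{P;h}(s,a)|`. One step of the occupancy recursion
splits `d̂_h P̂_h - d_h P_h = (d̂_h - d_h) P̂_h + d_h (P̂_h - P_h)`; since `P̂_h` is stochastic the
first term contributes at most `Δ_h`, and the second at most `ε_h` by hypothesis. Multiplying by the
policy at step `h + 1` does not change the ℓ₁ distance, so `Δ_{h+1} ≤ Δ_h + ε_h` and `Δ_0 = 0`. -/

noncomputable section

open Finset

variable {S Act : Type*} [Fintype S] [Fintype Act]

section Stochastic

variable {X Y : Type*} [Fintype X] [Fintype Y]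

theorem sum_abs_sub_mul_dist_eq (f g : X → ℝ) (π : X → Y → ℝ) (hπ : ∀ x, IsDist (π x)) :
    ∑ x, ∑ y, |f x * π x y - g x * π x y| = ∑ x, |f x - g x| := by
  refine sum_congr rfl fun x _ => ?_
  simp_rw [← sub_mul, abs_mul, abs_of_nonneg ((hπ x).1 _), ← mul_sum, (hπ x).2, mul_one]

theorem sum_abs_sub_pushforward_le (q p : X → ℝ) (hp : ∀ x, 0 ≤ p x) (Q K : X → Y → ℝ)
    (hQ : ∀ x, IsDist (Q x)) :
    ∑ y, |∑ x, q x * Q x y - ∑ x, p x * K x y|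
      ≤ ∑ x, |q x - p x| + ∑ x, p x * ∑ y, |Q x y - K x y| := by
  have hsplit : ∀ x y, q x * Q x y - p x * K x y = (q x - p x) * Q x y + p x * (Q x y - K x y) :=
    fun _ _ => by ring
  calc ∑ y, |∑ x, q x * Q x y - ∑ x, p x * K x y|
      ≤ ∑ y, ∑ x, (|q x - p x| * Q x y + p x * |Q x y - K x y|) := by
        refine sum_le_sum fun y _ => ?_
        rw [← sum_sub_distrib]
        refine (abs_sum_le_sum_abs _ _).trans (sum_le_sum fun x _ => ?_)
        rw [hsplit]
        refine (abs_add_le _ _).trans_eq ?_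
        rw [abs_mul, abs_mul, abs_of_nonneg ((hQ x).1 y), abs_of_nonneg (hp x)]
    _ = ∑ x, |q x - p x| + ∑ x, p x * ∑ y, |Q x y - K x y| := by
        rw [sum_comm, ← sum_add_distrib]
        refine sum_congr rfl fun x _ => ?_
        rw [sum_add_distrib, ← mul_sum, ← mul_sum, (hQ x).2, mul_one]

end Stochastic

theorem occ_nonneg {d0 : S → ℝ} (hd0 : ∀ s, 0 ≤ d0 s) {π : ℕ → S → Act → ℝ}
    (hπ : ∀ h s a, 0 ≤ π h s a) {P : ℕ → S → Act → S → ℝ} (hP : ∀ h s a s', 0 ≤ P h s a s') :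
    ∀ h s a, 0 ≤ occ d0 π P h s a
  | 0, s, a => mul_nonneg (hd0 s) (hπ 0 s a)
  | h + 1, _, _ => mul_nonneg (sum_nonneg fun s _ => sum_nonneg fun a _ =>
      mul_nonneg (occ_nonneg hd0 hπ hP h s a) (hP h s a _)) (hπ _ _ _)

theorem sum_abs_sub_occ_succ_le {d0 : S → ℝ} (hd0 : ∀ s, 0 ≤ d0 s) {π : ℕ → S → Act → ℝ}
    (hπ : ∀ h s, IsDist (π h s)) {P Phat : ℕ → S → Act → S → ℝ}
    (hP : ∀ h s a s', 0 ≤ P h s a s') (hPhat : ∀ h s a, IsDist (Phat h s a)) (h : ℕ) :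
    ∑ s, ∑ a, |occ d0 π Phat (h + 1) s a - occ d0 π P (h + 1) s a|
      ≤ ∑ s, ∑ a, |occ d0 π Phat h s a - occ d0 π P h s a|
        + ∑ s, ∑ a, occ d0 π P h s a * ∑ s', |Phat h s a s' - P h s a s'| := by
  have hpush := sum_abs_sub_pushforward_le (fun x : S × Act => occ d0 π Phat h x.1 x.2)
    (fun x => occ d0 π P h x.1 x.2) (fun x => occ_nonneg hd0 (fun h s => (hπ h s).1) hP h x.1 x.2)
    (fun x => Phat h x.1 x.2) (fun x => P h x.1 x.2) (fun x => hPhat h x.1 x.2)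
  simp only [Fintype.sum_prod_type] at hpush
  rw [occ.eq_2, occ.eq_2]
  rwa [sum_abs_sub_mul_dist_eq _ _ _ (hπ (h + 1))]

theorem tv_occupancy_propagation_general (H : ℕ)
    (d0 : S → ℝ) (hd0 : IsDist d0)
    (P Phat : ℕ → S → Act → S → ℝ)
    (hP : ∀ h s a, IsDist (P h s a)) (hPhat : ∀ h s a, IsDist (Phat h s a))
    (ε : ℕ → ℝ)
    (hclose : ∀ (π : ℕ → S → Act → ℝ), (∀ h s, IsDist (π h s)) →
      ∀ t < H, ∑ s, ∑ a, occ d0 π P t s a * (∑ s', |Phat t s a s' - P t s a s'|) ≤ ε t) :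
    ∀ (π : ℕ → S → Act → ℝ), (∀ h s, IsDist (π h s)) →
      ∀ h < H, ∑ s, ∑ a, |occ d0 π Phat h s a - occ d0 π P h s a|
        ≤ ∑ t ∈ Finset.range h, ε t := by
  intro π hπ h hh
  induction h with
  | zero => simp [occ]
  | succ h ih =>
    rw [sum_range_succ]
    exact (sum_abs_sub_occ_succ_le hd0.1 hπ (fun h s a => (hP h s a).1) hPhat h).trans
      (add_le_add (ih (by omega)) (hclose π hπ h (by omega)))

/-- **Total-variation propagation of occupancy distributions.**
If for every policy the expected (under the `P`-occupancy at step `t`) total-variation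
distance between `P̂_t` and `P_t` is at most `ε t`, then for every policy `π` and
step `h < H`, the ℓ₁ distance between the step-`h` occupancies of `π` under `P̂`
and under `P` is at most `Σ_{t<h} ε t`. -/
theorem tv_occupancy_propagation (H : ℕ)
    (d0 : S → ℝ) (hd0 : IsDist d0)
    (P Phat : ℕ → S → Act → S → ℝ)
    (hP : ∀ h s a, IsDist (P h s a)) (hPhat : ∀ h s a, IsDist (Phat h s a))
    (ε : ℕ → ℝ) (hε : ∀ t, 0 ≤ ε t)
    (hclose : ∀ (π : ℕ → S → Act → ℝ), (∀ h s, IsDist (π h s)) →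
      ∀ t < H, ∑ s, ∑ a, occ d0 π P t s a * (∑ s', |Phat t s a s' - P t s a s'|) ≤ ε t) :
    ∀ (π : ℕ → S → Act → ℝ), (∀ h s, IsDist (π h s)) →
      ∀ h < H, ∑ s, ∑ a, |occ d0 π Phat h s a - occ d0 π P h s a|
        ≤ ∑ t ∈ Finset.range h, ε t :=
  tv_occupancy_propagation_general H d0 hd0 P Phat hP hPhat ε hclose
end
end

section
/- (Elliptical potential upper bound.) Let d ≥ 1, t ≥ 0, x_1,…,x_t ∈ ℝ^d, λ > 0, and Λ := λ·I + Σ_{i=1}^t x_i x_iᵀ. Then Λ is positive definite (hence invertible) and Σ_{i=1}^t x_iᵀ Λ^{-1} x_i ≤ d. -/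
/-!
With `S := ∑ᵢ xᵢ xᵢᵀ` and `Λ := λ I + S`, each term `xᵢᵀ Λ⁻¹ xᵢ` is `tr (Λ⁻¹ xᵢ xᵢᵀ)`, so the
potential is `tr (Λ⁻¹ S) = tr (Λ⁻¹ (Λ - λ I)) = d - λ tr Λ⁻¹`, and `tr Λ⁻¹ ≥ 0` because `Λ⁻¹` is
positive definite along with `Λ`.
-/

open Matrix

namespace Matrix

variable {n ι : Type*}

lemma posDef_smul_one_add [DecidableEq n] {c : ℝ} (hc : 0 < c) {S : Matrix n n ℝ}
    (hS : S.PosSemidef) : (c • 1 + S).PosDef :=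
  ((PosDef.one).smul hc).add_posSemidef hS

variable [Fintype n]

lemma dotProduct_mulVec_eq_trace_mul_vecMulVec (A : Matrix n n ℝ) (v : n → ℝ) :
    v ⬝ᵥ A *ᵥ v = trace (A * vecMulVec v v) := by
  rw [mul_vecMulVec, trace_vecMulVec, dotProduct_comm]

lemma posSemidef_sum_vecMulVec_self [Fintype ι] (x : ι → n → ℝ) :
    (∑ i, vecMulVec (x i) (x i)).PosSemidef :=
  posSemidef_sum _ fun i _ => posSemidef_vecMulVec_self_star (x i)

variable [DecidableEq n]

lemma trace_inv_mul_sub_smul_one_le_card {Λ : Matrix n n ℝ} (hΛ : Λ.PosDef) {c : ℝ}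
    (hc : 0 ≤ c) : trace (Λ⁻¹ * (Λ - c • 1)) ≤ (Fintype.card n : ℝ) := by
  have htrace : 0 ≤ trace Λ⁻¹ := hΛ.inv.posSemidef.trace_nonneg
  rw [Matrix.mul_sub, nonsing_inv_mul _ hΛ.det_pos.ne'.isUnit, Matrix.mul_smul, Matrix.mul_one,
    trace_sub, trace_one, trace_smul, smul_eq_mul]
  linarith [mul_nonneg hc htrace]

lemma sum_dotProduct_inv_mulVec_le_card [Fintype ι] (x : ι → n → ℝ) {c : ℝ} (hc : 0 < c) :
    ∑ i, x i ⬝ᵥ (c • 1 + ∑ j, vecMulVec (x j) (x j))⁻¹ *ᵥ x i ≤ (Fintype.card n : ℝ) := by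
  set Λ := c • 1 + ∑ j, vecMulVec (x j) (x j)
  have hΛ : Λ.PosDef := posDef_smul_one_add hc (posSemidef_sum_vecMulVec_self x)
  calc ∑ i, x i ⬝ᵥ Λ⁻¹ *ᵥ x i = trace (Λ⁻¹ * (Λ - c • 1)) := by
        simp only [dotProduct_mulVec_eq_trace_mul_vecMulVec, Λ, add_sub_cancel_left,
          Matrix.mul_sum, trace_sum]
    _ ≤ (Fintype.card n : ℝ) := trace_inv_mul_sub_smul_one_le_card hΛ hc.le

end Matrix

theorem elliptical_potential_general
    {d t : ℕ}
    (x : Fin t → Fin d → ℝ) (lam : ℝ) (hlam : 0 < lam) :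
    (lam • (1 : Matrix (Fin d) (Fin d) ℝ) + ∑ i, vecMulVec (x i) (x i)).PosDef ∧
      ∑ i, (x i) ⬝ᵥ
          ((lam • (1 : Matrix (Fin d) (Fin d) ℝ) + ∑ j, vecMulVec (x j) (x j))⁻¹).mulVec (x i)
        ≤ (d : ℝ) :=
  ⟨posDef_smul_one_add hlam (posSemidef_sum_vecMulVec_self x),
    by simpa using sum_dotProduct_inv_mulVec_le_card x hlam⟩

/-- **Elliptical potential upper bound.**
For `x_1,…,x_t ∈ ℝ^d`, `λ > 0` and `Λ := λ·I + Σᵢ xᵢ xᵢᵀ`, the matrix `Λ` is positive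
definite (hence invertible) and `Σᵢ xᵢᵀ Λ⁻¹ xᵢ ≤ d`. -/
theorem elliptical_potential
    {d t : ℕ} (hd : 1 ≤ d)
    (x : Fin t → Fin d → ℝ) (lam : ℝ) (hlam : 0 < lam) :
    (lam • (1 : Matrix (Fin d) (Fin d) ℝ) + ∑ i, vecMulVec (x i) (x i)).PosDef ∧
      ∑ i, (x i) ⬝ᵥ
          ((lam • (1 : Matrix (Fin d) (Fin d) ℝ) + ∑ j, vecMulVec (x j) (x j))⁻¹).mulVec (x i)
        ≤ (d : ℝ) :=
  elliptical_potential_general x lam hlam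
end

section
/- (ℓ∞ perturbation bound for the clipped optimistic value class.) Let S be any set, 𝒜 a finite action set, d ≥ 1, and let φ : S×𝒜 → ℝ^d satisfy ‖φ(s,a)‖₂ ≤ 1 for all (s,a). Let r : S×𝒜 → ℝ and M ∈ ℝ. For i ∈ {1,2}, let w_i ∈ ℝ^d, β_i ≥ 0 with β₂ ≤ B, and let Λ_i be a symmetric d×d real matrix with Λ_i ⪰ I (all eigenvalues at least 1); define f_i(s) := min{ max_{a∈𝒜} ( w_iᵀ φ(s,a) + r(s,a) + β_i · √(φ(s,a)ᵀ Λ_i^{-1} φ(s,a)) ), M }. Then for every s ∈ S: |f₁(s) − f₂(s)| ≤ ‖w₁ − w₂‖₂ + |β₁ − β₂| + B · √( ‖Λ₁^{-1} − Λ₂^{-1}‖ ), where ‖·‖ denotes the operator (spectral) norm on d×d matrices. -/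
/-!
Clipping at `M` and taking the maximum over actions are both `1`-Lipschitz for the sup norm, so it
suffices to compare the two optimistic values of a single action. Their linear parts differ by at
most `‖w₁ - w₂‖` (Cauchy–Schwarz, `‖φ‖ ≤ 1`). The bonuses split as
`(β₁ - β₂) √q₁ + β₂ (√q₁ - √q₂)` with `qᵢ = φᵀ Λᵢ⁻¹ φ`; here `Λ₁ ⪰ I` gives `q₁ ≤ ‖φ‖² ≤ 1`, and
`|√q₁ - √q₂| ≤ √|q₁ - q₂| ≤ √‖Λ₁⁻¹ - Λ₂⁻¹‖`.
-/

open Matrix WithLp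

theorem Real.abs_sqrt_sub_sqrt_le_sqrt_abs_sub (a b : ℝ) : |√a - √b| ≤ √|a - b| := by
  wlog hba : b ≤ a generalizing a b
  · rw [abs_sub_comm, abs_sub_comm a]
    exact this b a (le_of_not_ge hba)
  rw [abs_of_nonneg (sub_nonneg.2 (Real.sqrt_le_sqrt hba)), abs_of_nonneg (sub_nonneg.2 hba)]
  rcases le_total 0 b with hb | hb
  · have hsq : a ≤ (√(a - b) + √b) ^ 2 := by
      nlinarith [Real.sq_sqrt (sub_nonneg.2 hba), Real.sq_sqrt hb,
        mul_nonneg (Real.sqrt_nonneg (a - b)) (Real.sqrt_nonneg b)]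
    linarith [(Real.sqrt_le_left (by positivity)).2 hsq]
  · rw [Real.sqrt_eq_zero_of_nonpos hb, sub_zero]
    exact Real.sqrt_le_sqrt (by linarith)

theorem abs_mul_sqrt_sub_mul_sqrt_le {β₁ β₂ B q₁ q₂ : ℝ} (hβ₂ : 0 ≤ β₂) (hβ₂B : β₂ ≤ B)
    (hq₁ : q₁ ≤ 1) : |β₁ * √q₁ - β₂ * √q₂| ≤ |β₁ - β₂| + B * √|q₁ - q₂| := by
  have hsqrt : |√q₁| ≤ 1 := by
    rw [abs_of_nonneg (Real.sqrt_nonneg _)]; exact Real.sqrt_le_one.2 hq₁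
  calc |β₁ * √q₁ - β₂ * √q₂| = |(β₁ - β₂) * √q₁ + β₂ * (√q₁ - √q₂)| := by ring_nf
    _ ≤ |(β₁ - β₂) * √q₁| + |β₂ * (√q₁ - √q₂)| := abs_add_le _ _
    _ = |β₁ - β₂| * |√q₁| + β₂ * |√q₁ - √q₂| := by rw [abs_mul, abs_mul, abs_of_nonneg hβ₂]
    _ ≤ |β₁ - β₂| * 1 + B * √|q₁ - q₂| := by
      gcongr
      · linarith
      · exact Real.abs_sqrt_sub_sqrt_le_sqrt_abs_sub q₁ q₂
    _ = |β₁ - β₂| + B * √|q₁ - q₂| := by rw [mul_one]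

section

variable {α β : Type*} [AddCommGroup β] [LinearOrder β] [IsOrderedAddMonoid β]
  {s : Finset α} (hs : s.Nonempty) {f g : α → β} {C : β}

theorem Finset.sup'_sub_sup'_le (h : ∀ a ∈ s, f a - g a ≤ C) : s.sup' hs f - s.sup' hs g ≤ C := by
  rw [sub_le_iff_le_add]
  exact sup'_le _ _ fun a ha =>
    (sub_le_iff_le_add.1 (h a ha)).trans (add_le_add le_rfl (le_sup' g ha))

theorem Finset.abs_sup'_sub_sup'_le (h : ∀ a ∈ s, |f a - g a| ≤ C) :
    |s.sup' hs f - s.sup' hs g| ≤ C :=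
  abs_sub_le_iff.2
    ⟨sup'_sub_sup'_le hs fun a ha => (le_abs_self _).trans (h a ha),
      sup'_sub_sup'_le hs fun a ha =>
        (le_abs_self _).trans ((abs_sub_comm (g a) (f a)).trans_le (h a ha))⟩

end

section

variable {n : Type*} [Fintype n]

theorem EuclideanSpace.norm_toLp_eq_sqrt (x : n → ℝ) : ‖toLp 2 x‖ = √(∑ i, x i ^ 2) := by
  simp [EuclideanSpace.norm_eq]

theorem abs_dotProduct_le_norm_toLp_mul (v x : n → ℝ) :
    |v ⬝ᵥ x| ≤ ‖toLp 2 v‖ * ‖toLp 2 x‖ := by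
  have := abs_real_inner_le_norm (toLp 2 x) (toLp 2 v)
  rwa [EuclideanSpace.inner_toLp_toLp, star_trivial, mul_comm] at this

variable [DecidableEq n]

theorem abs_dotProduct_mulVec_le (A : Matrix n n ℝ) (x : n → ℝ) :
    |x ⬝ᵥ A *ᵥ x| ≤ ‖toEuclideanCLM (𝕜 := ℝ) A‖ * ‖toLp 2 x‖ ^ 2 := by
  set T := toEuclideanCLM (𝕜 := ℝ) A
  calc |x ⬝ᵥ A *ᵥ x| = |inner ℝ (toLp 2 x) (T (toLp 2 x))| := by rw [inner_toEuclideanCLM]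
    _ ≤ ‖toLp 2 x‖ * ‖T (toLp 2 x)‖ := abs_real_inner_le_norm _ _
    _ ≤ ‖toLp 2 x‖ * (‖T‖ * ‖toLp 2 x‖) := by gcongr; exact T.le_opNorm _
    _ = ‖T‖ * ‖toLp 2 x‖ ^ 2 := by ring

theorem dotProduct_inv_mulVec_le_dotProduct_self {Λ : Matrix n n ℝ} (hΛ : (Λ - 1).PosSemidef)
    (x : n → ℝ) : x ⬝ᵥ Λ⁻¹ *ᵥ x ≤ x ⬝ᵥ x := by
  -- With `Λ = 1 + P` and `y = Λ⁻¹ x`: `x ⬝ x - x ⬝ Λ⁻¹ x = y ⬝ P y + ‖P y‖²`.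
  set P := Λ - 1
  have hdet : IsUnit Λ.det := by
    rw [← isUnit_iff_isUnit_det, show Λ = 1 + P by simp [P]]
    exact (PosDef.one.add_posSemidef hΛ).isUnit
  set y := Λ⁻¹ *ᵥ x
  have hxy : x = y + P *ᵥ y :=
    calc x = Λ *ᵥ y := by rw [mulVec_mulVec, mul_nonsing_inv _ hdet, one_mulVec]
      _ = y + P *ᵥ y := by simp [P, sub_mulVec]
  have hPy : 0 ≤ y ⬝ᵥ P *ᵥ y := by simpa using hΛ.dotProduct_mulVec_nonneg y
  have hPP : 0 ≤ P *ᵥ y ⬝ᵥ P *ᵥ y := dotProduct_self_star_nonneg _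
  rw [hxy]
  simp only [add_dotProduct, dotProduct_add]
  linarith [dotProduct_comm y (P *ᵥ y)]

noncomputable def optimisticValue (w : n → ℝ) (β : ℝ) (Λ : Matrix n n ℝ) (c : ℝ) (ψ : n → ℝ) : ℝ :=
  w ⬝ᵥ ψ + c + β * √(ψ ⬝ᵥ Λ⁻¹ *ᵥ ψ)

theorem abs_optimisticValue_sub_le {w₁ w₂ ψ : n → ℝ} {c β₁ β₂ B : ℝ} {Λ₁ Λ₂ : Matrix n n ℝ}
    (hψ : ‖toLp 2 ψ‖ ≤ 1) (hβ₂ : 0 ≤ β₂) (hβ₂B : β₂ ≤ B) (hΛ₁ : (Λ₁ - 1).PosSemidef) :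
    |optimisticValue w₁ β₁ Λ₁ c ψ - optimisticValue w₂ β₂ Λ₂ c ψ|
      ≤ ‖toLp 2 (w₁ - w₂)‖ + |β₁ - β₂| + B * √‖toEuclideanCLM (𝕜 := ℝ) (Λ₁⁻¹ - Λ₂⁻¹)‖ := by
  unfold optimisticValue
  set q₁ := ψ ⬝ᵥ Λ₁⁻¹ *ᵥ ψ
  set q₂ := ψ ⬝ᵥ Λ₂⁻¹ *ᵥ ψ
  set T := toEuclideanCLM (𝕜 := ℝ) (Λ₁⁻¹ - Λ₂⁻¹)
  have hψ₀ := norm_nonneg (toLp 2 ψ)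
  have hq₁ : q₁ ≤ 1 :=
    calc q₁ ≤ ψ ⬝ᵥ ψ := dotProduct_inv_mulVec_le_dotProduct_self hΛ₁ ψ
      _ ≤ ‖toLp 2 ψ‖ * ‖toLp 2 ψ‖ := (le_abs_self _).trans (abs_dotProduct_le_norm_toLp_mul ψ ψ)
      _ ≤ 1 := mul_le_one₀ hψ hψ₀ hψ
  have hq : |q₁ - q₂| ≤ ‖T‖ :=
    calc |q₁ - q₂| = |ψ ⬝ᵥ (Λ₁⁻¹ - Λ₂⁻¹) *ᵥ ψ| := by rw [sub_mulVec, dotProduct_sub]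
      _ ≤ ‖T‖ * ‖toLp 2 ψ‖ ^ 2 := abs_dotProduct_mulVec_le _ ψ
      _ ≤ ‖T‖ := mul_le_of_le_one_right (norm_nonneg _) (pow_le_one₀ hψ₀ hψ)
  have hw : |w₁ ⬝ᵥ ψ - w₂ ⬝ᵥ ψ| ≤ ‖toLp 2 (w₁ - w₂)‖ := by
    rw [← sub_dotProduct]
    exact (abs_dotProduct_le_norm_toLp_mul _ _).trans
      (mul_le_of_le_one_right (norm_nonneg _) hψ)
  calc _ = |(w₁ ⬝ᵥ ψ - w₂ ⬝ᵥ ψ) + (β₁ * √q₁ - β₂ * √q₂)| := by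
        congr 1; ring
    _ ≤ |w₁ ⬝ᵥ ψ - w₂ ⬝ᵥ ψ| + |β₁ * √q₁ - β₂ * √q₂| := abs_add_le _ _
    _ ≤ ‖toLp 2 (w₁ - w₂)‖ + (|β₁ - β₂| + B * √|q₁ - q₂|) :=
      add_le_add hw (abs_mul_sqrt_sub_mul_sqrt_le hβ₂ hβ₂B hq₁)
    _ ≤ ‖toLp 2 (w₁ - w₂)‖ + |β₁ - β₂| + B * √‖T‖ := by
      rw [← add_assoc]
      gcongr
      linarith

end

theorem clipped_value_class_perturbation_general
    {S Act : Type*} [Fintype Act] [Nonempty Act]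
    {d : ℕ}
    (φ : S → Act → Fin d → ℝ)
    (hφ : ∀ s a, Real.sqrt (∑ i, φ s a i ^ 2) ≤ 1)
    (r : S → Act → ℝ) (M B : ℝ)
    (w₁ w₂ : Fin d → ℝ) (β₁ β₂ : ℝ)
    (hβ₂ : 0 ≤ β₂) (hβ₂B : β₂ ≤ B)
    (Λ₁ Λ₂ : Matrix (Fin d) (Fin d) ℝ)
    (hΛ₁ : (Λ₁ - 1).PosSemidef)
    (s : S) :
    |min (Finset.univ.sup' Finset.univ_nonempty (fun a : Act =>
            w₁ ⬝ᵥ φ s a + r s a + β₁ * Real.sqrt (φ s a ⬝ᵥ (Λ₁⁻¹).mulVec (φ s a)))) M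
      - min (Finset.univ.sup' Finset.univ_nonempty (fun a : Act =>
            w₂ ⬝ᵥ φ s a + r s a + β₂ * Real.sqrt (φ s a ⬝ᵥ (Λ₂⁻¹).mulVec (φ s a)))) M|
      ≤ Real.sqrt (∑ i, (w₁ i - w₂ i) ^ 2) + |β₁ - β₂|
        + B * Real.sqrt ‖Matrix.toEuclideanCLM (𝕜 := ℝ) (Λ₁⁻¹ - Λ₂⁻¹)‖ := by
  rw [show √(∑ i, (w₁ i - w₂ i) ^ 2) = ‖toLp 2 (w₁ - w₂)‖ from
    (EuclideanSpace.norm_toLp_eq_sqrt _).symm]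
  refine (abs_inf_sub_inf_le_abs _ _ M).trans (Finset.abs_sup'_sub_sup'_le _ fun a _ => ?_)
  exact abs_optimisticValue_sub_le ((EuclideanSpace.norm_toLp_eq_sqrt _).trans_le (hφ s a))
    hβ₂ hβ₂B hΛ₁

/-- **ℓ∞ perturbation bound for the clipped optimistic value class.**
With `f_i(s) := min{ max_a ( wᵢᵀ φ(s,a) + r(s,a) + βᵢ ‖φ(s,a)‖_{Λᵢ⁻¹} ), M }` for
feature maps bounded by `1`, `0 ≤ βᵢ`, `β₂ ≤ B`, and symmetric `Λᵢ ⪰ I`, we have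
`|f₁(s) − f₂(s)| ≤ ‖w₁ − w₂‖₂ + |β₁ − β₂| + B √(‖Λ₁⁻¹ − Λ₂⁻¹‖_op)` for every `s`. -/
theorem clipped_value_class_perturbation
    {S Act : Type*} [Fintype Act] [Nonempty Act]
    {d : ℕ} (hd : 1 ≤ d)
    (φ : S → Act → Fin d → ℝ)
    (hφ : ∀ s a, Real.sqrt (∑ i, φ s a i ^ 2) ≤ 1)
    (r : S → Act → ℝ) (M B : ℝ)
    (w₁ w₂ : Fin d → ℝ) (β₁ β₂ : ℝ)
    (hβ₁ : 0 ≤ β₁) (hβ₂ : 0 ≤ β₂) (hβ₂B : β₂ ≤ B)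
    (Λ₁ Λ₂ : Matrix (Fin d) (Fin d) ℝ)
    (hΛ₁s : Λ₁.IsSymm) (hΛ₂s : Λ₂.IsSymm)
    (hΛ₁ : (Λ₁ - 1).PosSemidef) (hΛ₂ : (Λ₂ - 1).PosSemidef)
    (s : S) :
    |min (Finset.univ.sup' Finset.univ_nonempty (fun a : Act =>
            w₁ ⬝ᵥ φ s a + r s a + β₁ * Real.sqrt (φ s a ⬝ᵥ (Λ₁⁻¹).mulVec (φ s a)))) M
      - min (Finset.univ.sup' Finset.univ_nonempty (fun a : Act =>
            w₂ ⬝ᵥ φ s a + r s a + β₂ * Real.sqrt (φ s a ⬝ᵥ (Λ₂⁻¹).mulVec (φ s a)))) M|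
      ≤ Real.sqrt (∑ i, (w₁ i - w₂ i) ^ 2) + |β₁ - β₂|
        + B * Real.sqrt ‖Matrix.toEuclideanCLM (𝕜 := ℝ) (Λ₁⁻¹ - Λ₂⁻¹)‖ :=
  clipped_value_class_perturbation_general φ hφ r M B w₁ w₂ β₁ β₂ hβ₂ hβ₂B Λ₁ Λ₂ hΛ₁ s
end

section
/- (Almost-optimism of clipped optimistic value iteration under average-case misspecification; Lemma lsvi-optimism of the paper.) Let S be a finite state space, 𝒜 a finite action set, H ∈ ℕ, and d₀ an initial distribution on S. Let P* be a transition model and r = (r_h) a reward with r_h(s,a) ∈ [0,1] for all h,s,a; let Q*_h, V*_h be the optimal value functions (V*_H ≡ 0, Q*_h(s,a) = r_h(s,a) + Σ_{s'} P*_h(s'|s,a) V*_{h+1}(s'), V*_h(s) = max_a Q*_h(s,a)) and let π* be a deterministic policy that is greedy with respect to Q*. Let M_V ≥ H, β ≥ 0, ι ≥ 0, let b_h : S×𝒜 → [0,∞) be arbitrary nonnegative 'bonus' functions, and let P̂_h : S×𝒜×S → ℝ be arbitrary real-valued functions (not necessarily probability kernels). Define V̂_H ≡ 0, Q̂_h(s,a)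 := r_h(s,a) + Σ_{s'} P̂_h(s'|s,a) V̂_{h+1}(s') + β·b_h(s,a), a deterministic greedy policy π̂ with Q̂_h(s, π̂_h(s)) = max_a Q̂_h(s,a), and V̂_h(s) := min{ max_a Q̂_h(s,a), M_V }. For a trajectory prefix τ_h = (s_0,…,s_h) define the indicator ζ_h(τ_h) := Π_{h'=0}^{h} 1[Q̂_{h'}(s_{h'}, π̂_{h'}(s_{h'})) ≤ M_V], with the convention ζ_{−1} ≡ 1. Suppose that for every h ∈ {0,…,H−1}: | E_{π*,P*}[ ( Σ_{s'} (P̂_h(s'|s_h,a_h) − P*_h(s'|s_h,a_h)) V̂_{h+1}(s') ) · ζ_h(τ_h) ] | ≤ β · E_{π*,P*}[ b_h(s_h,a_h) · ζ_h(τ_h) ] + ι, where E_{π*,P*} is over the trajectory generated by executing π* in P* from d₀ (so a_h = π*_h(s_h)). Then for every h ∈ {0,…,H−1}: (a) E_{π*,P*}[ (Q*_h(s_h,a_h) − Q̂_h(s_h,a_h)) · ζ_h(τ_h) ] ≤ (H−h)·ι, and (b) E_{π*,P*}[ (V*_h(s_h) − V̂_h(s_h)) · ζ_{h−1}(τ_{h−1})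 ] ≤ (H−h)·ι. In particular Σ_s d₀(s)·(V*_0(s) − V̂_0(s)) ≤ H·ι. -/
/-! Write `A_h = E[(Q*_h − Q̂_h)(s_h, a_h) ζ_h]` and `B_h = E[(V*_h − V̂_h)(s_h) ζ_{h−1}]`,
expectations along the trajectories of `π*` in `P*`. Where the clipping at step `h` is inactive
(`ζ` keeps its factor) we have `V̂_h ≥ Q̂_h(·, π*)` and `V*_h = Q*_h(·, π*)`; where it is active,
`V̂_h = M_V ≥ V*_h` because `V*_h ≤ H − h`. Hence `B_h ≤ A_h`. The Bellman equations give
`Q*_h − Q̂_h = P*_h(V*_{h+1} − V̂_{h+1}) − (P̂_h − P*_h) V̂_{h+1} − β b_h`; averaged against `ζ_h`,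
the first term is `B_{h+1}` (one more step of the trajectory) and the hypothesis bounds the other
two by `ι`, so `A_h ≤ B_{h+1} + ι`. Since `B_H = 0`, this telescopes. -/

noncomputable section

open Finset

variable {S Act : Type*} [Fintype S] [Fintype Act]

/-- Probability of the trajectory prefix `τ = (s_0, …, s_h)` when the deterministic
policy `π` is executed in the transition model `P` starting from `d0`. -/
def trajProb (d0 : S → ℝ) (P : ℕ → S → Act → S → ℝ) (π : ℕ → S → Act)
    (h : ℕ) (τ : Fin (h + 1) → S) : ℝ :=
  d0 (τ 0) * ∏ t : Fin h,
    P t.1 (τ t.castSucc) (π t.1 (τ t.castSucc)) (τ t.succ)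

/-- The indicator `1[Q̂_t(s, π̂_t(s)) ≤ M_V]` (as a real number). -/
def ind (Q : ℕ → S → Act → ℝ) (π : ℕ → S → Act) (MV : ℝ) (t : ℕ) (s : S) : ℝ :=
  if Q t s (π t s) ≤ MV then 1 else 0

lemma trajProb_nonneg {S Act : Type*} {d0 : S → ℝ} {P : ℕ → S → Act → S → ℝ}
    (hd0 : ∀ s, 0 ≤ d0 s) (hP : ∀ h s a s', 0 ≤ P h s a s') (π : ℕ → S → Act) (h : ℕ)
    (τ : Fin (h + 1) → S) : 0 ≤ trajProb d0 P π h τ :=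
  mul_nonneg (hd0 _) (prod_nonneg fun _ _ => hP _ _ _ _)

lemma trajProb_snoc {S Act : Type*} (d0 : S → ℝ) (P : ℕ → S → Act → S → ℝ)
    (π : ℕ → S → Act) (h : ℕ) (τ : Fin (h + 1) → S) (s' : S) :
    trajProb d0 P π (h + 1) (Fin.snoc τ s') =
      trajProb d0 P π h τ * P h (τ (Fin.last h)) (π h (τ (Fin.last h))) s' := by
  have h0 : (0 : Fin (h + 1 + 1)) = (0 : Fin (h + 1)).castSucc := rfl
  simp only [trajProb, Fin.prod_univ_castSucc, h0, Fin.snoc_castSucc, Fin.val_castSucc,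
    Fin.val_last, Fin.succ_last, Fin.snoc_last, Fin.succ_castSucc]
  ring

lemma sum_trajProb_succ {S Act : Type*} [Fintype S] (d0 : S → ℝ) (P : ℕ → S → Act → S → ℝ)
    (π : ℕ → S → Act) (h : ℕ) (z : (Fin (h + 1) → S) → ℝ) (g : S → ℝ) :
    ∑ τ : Fin (h + 1 + 1) → S,
        trajProb d0 P π (h + 1) τ * z (Fin.init τ) * g (τ (Fin.last (h + 1)))
      = ∑ τ : Fin (h + 1) → S, trajProb d0 P π h τ * z τ *
          ∑ s', P h (τ (Fin.last h)) (π h (τ (Fin.last h))) s' * g s' := by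
  rw [← (Fin.snocEquiv fun _ => S).sum_comp, Fintype.sum_prod_type, sum_comm]
  refine sum_congr rfl fun τ _ => ?_
  simp only [Fin.snocEquiv, Equiv.coe_fn_mk, Fin.init_snoc, Fin.snoc_last, trajProb_snoc, mul_sum]
  exact sum_congr rfl fun s' _ => by ring

lemma sum_trajProb_zero {S Act : Type*} [Fintype S] (d0 : S → ℝ) (P : ℕ → S → Act → S → ℝ)
    (π : ℕ → S → Act) (f : S → ℝ) :
    ∑ τ : Fin (0 + 1) → S, trajProb d0 P π 0 τ * f (τ (Fin.last 0)) = ∑ s, d0 s * f s := by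
  rw [← (Equiv.funUnique (Fin 1) S).symm.sum_comp]
  simp [trajProb]

lemma sum_mul_prod_castSucc_le {S : Type*} [Fintype S] {h : ℕ} {p : (Fin (h + 1) → S) → ℝ}
    {z : ℕ → S → ℝ} {f g : S → ℝ} (hp : ∀ τ, 0 ≤ p τ) (hz : ∀ t s, 0 ≤ z t s)
    (hgf : ∀ s, g s ≤ z h s * f s) :
    ∑ τ : Fin (h + 1) → S, p τ * (∏ t : Fin h, z t (τ t.castSucc)) * g (τ (Fin.last h))
      ≤ ∑ τ : Fin (h + 1) → S, p τ * (∏ t : Fin (h + 1), z t (τ t)) * f (τ (Fin.last h)) := by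
  refine sum_le_sum fun τ _ => ?_
  rw [Fin.prod_univ_castSucc, Fin.val_last, mul_assoc, mul_assoc, mul_assoc]
  exact mul_le_mul_of_nonneg_left (mul_le_mul_of_nonneg_left (hgf _)
    (prod_nonneg fun _ _ => hz _ _)) (hp τ)

lemma sub_min_le_ite_mul {v q M m : ℝ} (hv : v ≤ m) (hq : q ≤ M) :
    v - min M m ≤ (if M ≤ m then 1 else 0) * (v - q) := by
  split_ifs with hM
  · rw [min_eq_left hM]; linarith
  · rw [min_eq_right (not_le.mp hM).le]; linarith

lemma ind_nonneg {S Act : Type*} (Q : ℕ → S → Act → ℝ) (π : ℕ → S → Act) (MV : ℝ) (t : ℕ)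
    (s : S) : 0 ≤ ind Q π MV t s := by
  unfold ind; split_ifs <;> norm_num

lemma sum_mul_le_of_isDist {X : Type*} [Fintype X] {p v : X → ℝ} {c : ℝ} (hp : IsDist p)
    (hv : ∀ x, v x ≤ c) : ∑ x, p x * v x ≤ c :=
  calc ∑ x, p x * v x ≤ ∑ x, p x * c :=
        sum_le_sum fun x _ => mul_le_mul_of_nonneg_left (hv x) (hp.1 x)
    _ = c := by rw [← sum_mul, hp.2, one_mul]

lemma optimalValue_le_sub {S Act : Type*} [Fintype S] [Fintype Act] [Nonempty Act] {H : ℕ}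
    {P : ℕ → S → Act → S → ℝ} (hP : ∀ h s a, IsDist (P h s a)) {r : ℕ → S → Act → ℝ}
    (hr : ∀ h s a, r h s a ≤ 1) {Q : ℕ → S → Act → ℝ} {V : ℕ → S → ℝ} (hVH : ∀ s, V H s = 0)
    (hQ : ∀ h, h < H → ∀ s a, Q h s a = r h s a + ∑ s', P h s a s' * V (h + 1) s')
    (hV : ∀ h, h < H → ∀ s, V h s = univ.sup' univ_nonempty (fun a => Q h s a)) :
    ∀ h ≤ H, ∀ s, V h s ≤ H - h := by
  refine fun h hh => Nat.decreasingInduction (motive := fun h _ => ∀ s, V h s ≤ H - h)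
    (fun k hk ih s => ?_) (fun s => by simp [hVH]) hh
  rw [hV k hk, sup'_le_iff]
  intro a _
  have hnext := sum_mul_le_of_isDist (hP k s a) ih
  rw [hQ k hk]
  push_cast at hnext
  linarith [hr k s a]

lemma valueGap_le_ind_mul_qGap {S Act : Type*} [Fintype Act] [Nonempty Act]
    {Qstar Qhat : ℕ → S → Act → ℝ} {Vstar Vhat : ℕ → S → ℝ} {πstar πhat : ℕ → S → Act}
    {MV : ℝ} {h : ℕ} {s : S}
    (hVstar : Vstar h s = univ.sup' univ_nonempty (fun a => Qstar h s a))
    (hπstar : Qstar h s (πstar h s) = univ.sup' univ_nonempty (fun a => Qstar h s a))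
    (hπhat : Qhat h s (πhat h s) = univ.sup' univ_nonempty (fun a => Qhat h s a))
    (hVhat : Vhat h s = min (univ.sup' univ_nonempty (fun a => Qhat h s a)) MV)
    (hMV : Vstar h s ≤ MV) :
    Vstar h s - Vhat h s ≤
      ind Qhat πhat MV h s * (Qstar h s (πstar h s) - Qhat h s (πstar h s)) := by
  rw [hVstar, ← hπstar] at hMV ⊢
  rw [hVhat, ← hπhat, ind]
  exact sub_min_le_ite_mul hMV (hπhat ▸ le_sup' (fun a => Qhat h s a) (mem_univ _))

lemma sum_qGap_le_sum_valueGap_add {T S Act : Type*} [Fintype T] [Fintype S]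
    {Pstar Phat : ℕ → S → Act → S → ℝ} {r b Qstar Qhat : ℕ → S → Act → ℝ}
    {Vstar Vhat : ℕ → S → ℝ} {β ι : ℝ} {h : ℕ}
    (w : T → ℝ) (x : T → S) (a : T → Act)
    (hQstar : ∀ s a, Qstar h s a = r h s a + ∑ s', Pstar h s a s' * Vstar (h + 1) s')
    (hQhat : ∀ s a,
      Qhat h s a = r h s a + (∑ s', Phat h s a s' * Vhat (h + 1) s') + β * b h s a)
    (hmodel :
      |∑ τ, w τ * (∑ s', (Phat h (x τ) (a τ) s' - Pstar h (x τ) (a τ) s') * Vhat (h + 1) s')|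
        ≤ β * (∑ τ, w τ * b h (x τ) (a τ)) + ι) :
    ∑ τ, w τ * (Qstar h (x τ) (a τ) - Qhat h (x τ) (a τ))
      ≤ ∑ τ, w τ * ∑ s', Pstar h (x τ) (a τ) s' * (Vstar (h + 1) s' - Vhat (h + 1) s') + ι := by
  have hsplit : ∑ τ, w τ * (Qstar h (x τ) (a τ) - Qhat h (x τ) (a τ))
      = ∑ τ, w τ * ∑ s', Pstar h (x τ) (a τ) s' * (Vstar (h + 1) s' - Vhat (h + 1) s')
        - ∑ τ, w τ * (∑ s', (Phat h (x τ) (a τ) s' - Pstar h (x τ) (a τ) s') * Vhat (h + 1) s')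
        - β * ∑ τ, w τ * b h (x τ) (a τ) := by
    have hpoint : ∀ s a, Qstar h s a - Qhat h s a
        = ∑ s', Pstar h s a s' * (Vstar (h + 1) s' - Vhat (h + 1) s')
          - ∑ s', (Phat h s a s' - Pstar h s a s') * Vhat (h + 1) s' - β * b h s a := by
      intro s a
      simp only [hQstar, hQhat, mul_sub, sub_mul, sum_sub_distrib]
      ring
    rw [mul_sum, ← sum_sub_distrib, ← sum_sub_distrib]
    exact sum_congr rfl fun τ _ => by rw [hpoint]; ring
  linarith [neg_abs_le (∑ τ, w τ *
    (∑ s', (Phat h (x τ) (a τ) s' - Pstar h (x τ) (a τ) s') * Vhat (h + 1) s'))]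

lemma le_sub_mul_of_le_succ_add {A B : ℕ → ℝ} {H : ℕ} {ι : ℝ} (hBH : B H ≤ 0)
    (hBA : ∀ h < H, B h ≤ A h) (hAB : ∀ h < H, A h ≤ B (h + 1) + ι) :
    (∀ h < H, A h ≤ ((H - h : ℕ) : ℝ) * ι) ∧ ∀ h ≤ H, B h ≤ ((H - h : ℕ) : ℝ) * ι := by
  have hB : ∀ h ≤ H, B h ≤ ((H - h : ℕ) : ℝ) * ι := fun h hh =>
    Nat.decreasingInduction (motive := fun h _ => B h ≤ ((H - h : ℕ) : ℝ) * ι)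
      (fun k hk ih => by
        rw [show H - k = H - (k + 1) + 1 by omega]
        push_cast
        linarith [hBA k hk, hAB k hk])
      (by simpa using hBH) hh
  refine ⟨fun h hh => (hAB h hh).trans ?_, hB⟩
  rw [show H - h = H - (h + 1) + 1 by omega]
  push_cast
  linarith [hB (h + 1) hh]

theorem almost_optimism_general [Nonempty Act]
    (H : ℕ)
    (d0 : S → ℝ) (hd0 : IsDist d0)
    (Pstar : ℕ → S → Act → S → ℝ) (hPstar : ∀ h s a, IsDist (Pstar h s a))
    (r : ℕ → S → Act → ℝ) (hr : ∀ h s a, 0 ≤ r h s a ∧ r h s a ≤ 1)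
    (Qstar : ℕ → S → Act → ℝ) (Vstar : ℕ → S → ℝ)
    (hVstarH : ∀ s, Vstar H s = 0)
    (hQstar : ∀ h, h < H → ∀ s a,
      Qstar h s a = r h s a + ∑ s', Pstar h s a s' * Vstar (h + 1) s')
    (hVstar : ∀ h, h < H → ∀ s,
      Vstar h s = Finset.univ.sup' Finset.univ_nonempty (fun a => Qstar h s a))
    (πstar : ℕ → S → Act)
    (hπstar : ∀ h, h < H → ∀ s,
      Qstar h s (πstar h s) = Finset.univ.sup' Finset.univ_nonempty (fun a => Qstar h s a))
    (MV : ℝ) (hMV : (H : ℝ) ≤ MV)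
    (β ι : ℝ)
    (b : ℕ → S → Act → ℝ)
    (Phat : ℕ → S → Act → S → ℝ)
    (Qhat : ℕ → S → Act → ℝ) (Vhat : ℕ → S → ℝ)
    (hVhatH : ∀ s, Vhat H s = 0)
    (hQhat : ∀ h, h < H → ∀ s a,
      Qhat h s a = r h s a + (∑ s', Phat h s a s' * Vhat (h + 1) s') + β * b h s a)
    (πhat : ℕ → S → Act)
    (hπhat : ∀ h, h < H → ∀ s,
      Qhat h s (πhat h s) = Finset.univ.sup' Finset.univ_nonempty (fun a => Qhat h s a))
    (hVhat : ∀ h, h < H → ∀ s,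
      Vhat h s = min (Finset.univ.sup' Finset.univ_nonempty (fun a => Qhat h s a)) MV)
    (hmodel : ∀ h, h < H →
      |∑ τ : Fin (h + 1) → S, trajProb d0 Pstar πstar h τ *
          (∏ t : Fin (h + 1), ind Qhat πhat MV t.1 (τ t)) *
          (∑ s', (Phat h (τ (Fin.last h)) (πstar h (τ (Fin.last h))) s'
                  - Pstar h (τ (Fin.last h)) (πstar h (τ (Fin.last h))) s')
              * Vhat (h + 1) s')|
        ≤ β * (∑ τ : Fin (h + 1) → S, trajProb d0 Pstar πstar h τ *
              (∏ t : Fin (h + 1), ind Qhat πhat MV t.1 (τ t)) *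
              b h (τ (Fin.last h)) (πstar h (τ (Fin.last h)))) + ι) :
    (∀ h, h < H →
      ∑ τ : Fin (h + 1) → S, trajProb d0 Pstar πstar h τ *
          (∏ t : Fin (h + 1), ind Qhat πhat MV t.1 (τ t)) *
          (Qstar h (τ (Fin.last h)) (πstar h (τ (Fin.last h)))
            - Qhat h (τ (Fin.last h)) (πstar h (τ (Fin.last h))))
        ≤ ((H - h : ℕ) : ℝ) * ι)
    ∧ (∀ h, h < H →
      ∑ τ : Fin (h + 1) → S, trajProb d0 Pstar πstar h τ *
          (∏ t : Fin h, ind Qhat πhat MV t.1 (τ t.castSucc)) *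
          (Vstar h (τ (Fin.last h)) - Vhat h (τ (Fin.last h)))
        ≤ ((H - h : ℕ) : ℝ) * ι)
    ∧ (∑ s, d0 s * (Vstar 0 s - Vhat 0 s) ≤ (H : ℝ) * ι) := by
  have hp := trajProb_nonneg hd0.1 (fun h s a => (hPstar h s a).1) πstar
  have hVstar_le (h : ℕ) (hh : h ≤ H) (s : S) : Vstar h s ≤ MV := by
    have := optimalValue_le_sub hPstar (fun h s a => (hr h s a).2) hVstarH hQstar hVstar h hh s
    linarith [h.cast_nonneg (α := ℝ)]
  obtain ⟨hA, hB⟩ := le_sub_mul_of_le_succ_add (ι := ι)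
    (A := fun h => ∑ τ : Fin (h + 1) → S, trajProb d0 Pstar πstar h τ *
      (∏ t : Fin (h + 1), ind Qhat πhat MV t.1 (τ t)) *
      (Qstar h (τ (Fin.last h)) (πstar h (τ (Fin.last h)))
        - Qhat h (τ (Fin.last h)) (πstar h (τ (Fin.last h)))))
    (B := fun h => ∑ τ : Fin (h + 1) → S, trajProb d0 Pstar πstar h τ *
      (∏ t : Fin h, ind Qhat πhat MV t.1 (τ t.castSucc)) *
      (Vstar h (τ (Fin.last h)) - Vhat h (τ (Fin.last h))))
    (by simp [hVstarH, hVhatH])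
    (fun h hh => sum_mul_prod_castSucc_le (hp h) (ind_nonneg Qhat πhat MV) fun s =>
      valueGap_le_ind_mul_qGap (hVstar h hh s) (hπstar h hh s) (hπhat h hh s) (hVhat h hh s)
        (hVstar_le h hh.le s))
    (fun h hh => by
      have hstep := sum_qGap_le_sum_valueGap_add (fun τ => trajProb d0 Pstar πstar h τ *
          ∏ t : Fin (h + 1), ind Qhat πhat MV t.1 (τ t)) (fun τ => τ (Fin.last h))
        (fun τ => πstar h (τ (Fin.last h))) (hQstar h hh) (hQhat h hh) (hmodel h hh)
      rwa [← sum_trajProb_succ] at hstep)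
  refine ⟨hA, fun h hh => hB h hh.le, ?_⟩
  have h0 := hB 0 H.zero_le
  simp only [Fin.prod_univ_zero, mul_one, Nat.sub_zero] at h0
  rwa [sum_trajProb_zero d0 Pstar πstar fun s => Vstar 0 s - Vhat 0 s] at h0

/-- **Almost-optimism of clipped optimistic value iteration under average-case
misspecification.**  With `V̂, Q̂` the clipped optimistic backups built from an
arbitrary (not necessarily stochastic) model `P̂` and bonuses `b`, `π̂` greedy w.r.t.
`Q̂`, `π*` greedy w.r.t. `Q*`, `ζ_h(τ_h) = Π_{h'≤h} 1[Q̂_{h'}(s_{h'},π̂(s_{h'})) ≤ M_V]`,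
and assuming the average-case model-error bound along `π*`'s trajectories, we get:
(a) `E_{π*}[(Q*_h − Q̂_h)(s_h,a_h) ζ_h(τ_h)] ≤ (H−h) ι`,
(b) `E_{π*}[(V*_h − V̂_h)(s_h) ζ_{h−1}(τ_{h−1})] ≤ (H−h) ι`, and in particular
(c) `Σ_s d₀(s)(V*_0(s) − V̂_0(s)) ≤ H ι`. -/
theorem almost_optimism [Nonempty Act]
    (H : ℕ)
    (d0 : S → ℝ) (hd0 : IsDist d0)
    (Pstar : ℕ → S → Act → S → ℝ) (hPstar : ∀ h s a, IsDist (Pstar h s a))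
    (r : ℕ → S → Act → ℝ) (hr : ∀ h s a, 0 ≤ r h s a ∧ r h s a ≤ 1)
    (Qstar : ℕ → S → Act → ℝ) (Vstar : ℕ → S → ℝ)
    (hVstarH : ∀ s, Vstar H s = 0)
    (hQstar : ∀ h, h < H → ∀ s a,
      Qstar h s a = r h s a + ∑ s', Pstar h s a s' * Vstar (h + 1) s')
    (hVstar : ∀ h, h < H → ∀ s,
      Vstar h s = Finset.univ.sup' Finset.univ_nonempty (fun a => Qstar h s a))
    (πstar : ℕ → S → Act)
    (hπstar : ∀ h, h < H → ∀ s,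
      Qstar h s (πstar h s) = Finset.univ.sup' Finset.univ_nonempty (fun a => Qstar h s a))
    (MV : ℝ) (hMV : (H : ℝ) ≤ MV)
    (β ι : ℝ) (hβ : 0 ≤ β) (hι : 0 ≤ ι)
    (b : ℕ → S → Act → ℝ) (hb : ∀ h s a, 0 ≤ b h s a)
    (Phat : ℕ → S → Act → S → ℝ)
    (Qhat : ℕ → S → Act → ℝ) (Vhat : ℕ → S → ℝ)
    (hVhatH : ∀ s, Vhat H s = 0)
    (hQhat : ∀ h, h < H → ∀ s a,
      Qhat h s a = r h s a + (∑ s', Phat h s a s' * Vhat (h + 1) s') + β * b h s a)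
    (πhat : ℕ → S → Act)
    (hπhat : ∀ h, h < H → ∀ s,
      Qhat h s (πhat h s) = Finset.univ.sup' Finset.univ_nonempty (fun a => Qhat h s a))
    (hVhat : ∀ h, h < H → ∀ s,
      Vhat h s = min (Finset.univ.sup' Finset.univ_nonempty (fun a => Qhat h s a)) MV)
    (hmodel : ∀ h, h < H →
      |∑ τ : Fin (h + 1) → S, trajProb d0 Pstar πstar h τ *
          (∏ t : Fin (h + 1), ind Qhat πhat MV t.1 (τ t)) *
          (∑ s', (Phat h (τ (Fin.last h)) (πstar h (τ (Fin.last h))) s'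
                  - Pstar h (τ (Fin.last h)) (πstar h (τ (Fin.last h))) s')
              * Vhat (h + 1) s')|
        ≤ β * (∑ τ : Fin (h + 1) → S, trajProb d0 Pstar πstar h τ *
              (∏ t : Fin (h + 1), ind Qhat πhat MV t.1 (τ t)) *
              b h (τ (Fin.last h)) (πstar h (τ (Fin.last h)))) + ι) :
    (∀ h, h < H →
      ∑ τ : Fin (h + 1) → S, trajProb d0 Pstar πstar h τ *
          (∏ t : Fin (h + 1), ind Qhat πhat MV t.1 (τ t)) *
          (Qstar h (τ (Fin.last h)) (πstar h (τ (Fin.last h)))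
            - Qhat h (τ (Fin.last h)) (πstar h (τ (Fin.last h))))
        ≤ ((H - h : ℕ) : ℝ) * ι)
    ∧ (∀ h, h < H →
      ∑ τ : Fin (h + 1) → S, trajProb d0 Pstar πstar h τ *
          (∏ t : Fin h, ind Qhat πhat MV t.1 (τ t.castSucc)) *
          (Vstar h (τ (Fin.last h)) - Vhat h (τ (Fin.last h)))
        ≤ ((H - h : ℕ) : ℝ) * ι)
    ∧ (∑ s, d0 s * (Vstar 0 s - Vhat 0 s) ≤ (H : ℝ) * ι) :=
  almost_optimism_general H d0 hd0 Pstar hPstar r hr Qstar Vstar hVstarH hQstar hVstar πstar hπstar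
    MV hMV β ι b Phat Qhat Vhat hVhatH hQhat πhat hπhat hVhat hmodel
end
end
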